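/- arXiv:2603.29610 — 2 statements merged into one kernel-verified Lean document; each statement's English description precedes it below -/
import Mathlib

section
/- As formal power series, ∏_{i≥1} 1/(1 − d x^i) = ∏_{i≥1} 1/(1 − x^i)^{a_i}, where a_i = (1/i) ∑_{q | i} φ(q) d^{i/q} and φ is Euler's totient function. -/
/-!
Taking logarithmic derivatives, `(1 - c X^i)⁻¹` contributes `∑_{k ≥ 1} i c^k X^(ik - 1)`, so the
coefficient of `X^(m-1)` in the logarithmic derivative of the left-hand side is `∑_{i ∣ m} i d^(m/i)`,
and that of the right-hand side is `∑_{i ∣ m} i a_i`. These agree because `i a_i` is the Dirichlet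
convolution of `φ` with `n ↦ d^n`, and `φ ⋆ 1 = id`. Both products have constant term `1`, and
logarithmic derivatives that agree below order `K` force coefficients that agree up to order `K`.

That `a_i` is an integer, i.e. `i ∣ ∑_{q ∣ i} φ(q) d^(i/q)`, is checked one prime power at a time:
over coprime factors the sum splits into sums for the factors, and for `i = p^e` it comes down to
Fermat's little theorem lifted to `c^(p^(e+1)) ≡ c^(p^e) (mod p^(e+1))`.
-/

open PowerSeries

/-- The necklace count: `a d i = (1/i) ∑_{q ∣ i} φ(q) d^(i/q)` (this sum is
divisible by `i`, so natural division is exact). -/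
def necklaceCount (d i : ℕ) : ℕ :=
  (∑ q ∈ Nat.divisors i, Nat.totient q * d ^ (i / q)) / i

open Finset

def necklaceSum (c : ℤ) (n : ℕ) : ℤ := ∑ q ∈ n.divisors, (q.totient : ℤ) * c ^ (n / q)

theorem necklaceSum_prime_pow_succ {p : ℕ} (hp : p.Prime) (c : ℤ) (e : ℕ) :
    necklaceSum c (p ^ (e + 1)) = p * necklaceSum c (p ^ e) + (c ^ p ^ (e + 1) - c ^ p ^ e) := by
  have hshift (a b : ℕ) : p ^ (a + 1) / p ^ (b + 1) = p ^ a / p ^ b := by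
    rw [pow_succ' p a, pow_succ' p b, Nat.mul_div_mul_left _ _ hp.pos]
  have htot (t : ℕ) : ((p ^ (t + 1 + 1)).totient : ℤ) = p * (p ^ (t + 1)).totient := by
    rw [pow_succ' p (t + 1), Nat.totient_mul_of_prime_of_dvd hp (dvd_pow_self p t.succ_ne_zero)]
    push_cast; ring
  have htot_p : ((p ^ (0 + 1)).totient : ℤ) = p - 1 := by
    rw [zero_add, pow_one, Nat.totient_prime hp, Nat.cast_sub hp.one_le, Nat.cast_one]
  simp only [necklaceSum, Nat.sum_divisors_prime_pow hp]
  rw [sum_range_succ', sum_range_succ', sum_range_succ' _ e, mul_add, mul_sum]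
  simp only [hshift, htot, htot_p, mul_assoc, pow_zero, Nat.div_one, Nat.totient_one, Nat.cast_one]
  ring

theorem prime_pow_dvd_necklaceSum {p : ℕ} (hp : p.Prime) (c : ℤ) (e : ℕ) :
    (p : ℤ) ^ e ∣ necklaceSum c (p ^ e) := by
  induction e with
  | zero => simp [necklaceSum]
  | succ e ih =>
    rw [necklaceSum_prime_pow_succ hp, pow_succ']
    refine dvd_add (mul_dvd_mul_left _ ih) ?_
    simpa [← pow_mul, ← pow_succ'] using dvd_sub_pow_of_dvd_sub (Int.prime_dvd_pow_self_sub hp c) e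

theorem necklaceSum_mul {m n : ℕ} (h : m.Coprime n) (c : ℤ) :
    necklaceSum c (m * n) = ∑ q ∈ n.divisors, (q.totient : ℤ) * necklaceSum (c ^ (n / q)) m := by
  rw [necklaceSum, Nat.divisors_mul, mul_def, sum_image h.mul_injOn_divisors, sum_product_right]
  refine sum_congr rfl fun q hq => ?_
  rw [necklaceSum, mul_sum]
  refine sum_congr rfl fun r hr => ?_
  have hr' := Nat.dvd_of_mem_divisors hr
  have hq' := Nat.dvd_of_mem_divisors hq
  rw [Nat.totient_mul ((h.coprime_dvd_left hr').coprime_dvd_right hq'),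
    ← Nat.div_mul_div_comm hr' hq', ← pow_mul, mul_comm (m / r)]
  push_cast; ring

theorem natCast_dvd_necklaceSum (n : ℕ) (c : ℤ) : (n : ℤ) ∣ necklaceSum c n := by
  induction n using Nat.recOnPosPrimePosCoprime generalizing c with
  | prime_pow p e hp _ => exact_mod_cast prime_pow_dvd_necklaceSum hp c e
  | zero => simp [necklaceSum]
  | one => simp
  | coprime a b _ _ hab iha ihb =>
    have ha : (a : ℤ) ∣ necklaceSum c (a * b) := by
      rw [necklaceSum_mul hab]
      exact dvd_sum fun q _ => dvd_mul_of_dvd_right (iha _) _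
    have hb : (b : ℤ) ∣ necklaceSum c (a * b) := by
      rw [mul_comm, necklaceSum_mul hab.symm]
      exact dvd_sum fun q _ => dvd_mul_of_dvd_right (ihb _) _
    exact_mod_cast (Nat.isCoprime_iff_coprime.mpr hab).mul_dvd ha hb

theorem dvd_sum_totient_mul_pow (d n : ℕ) : n ∣ ∑ q ∈ n.divisors, q.totient * d ^ (n / q) := by
  have hdvd := natCast_dvd_necklaceSum n d
  rw [necklaceSum] at hdvd
  exact_mod_cast hdvd

open ArithmeticFunction ArithmeticFunction.zeta in
theorem sum_divisors_sum_divisors_totient_mul {R : Type*} [CommSemiring R] (f : ℕ → R) (n : ℕ) :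
    ∑ i ∈ n.divisors, ∑ q ∈ i.divisors, (q.totient : R) * f (i / q) =
      ∑ i ∈ n.divisors, (i : R) * f (n / i) := by
  let T : ArithmeticFunction R := ⟨fun k => (k.totient : R), by simp⟩
  let F : ArithmeticFunction R := ⟨fun k => if k = 0 then 0 else f k, if_pos rfl⟩
  have hmul (G : ArithmeticFunction R) (k : ℕ) :
      (G * F) k = ∑ q ∈ k.divisors, G q * f (k / q) := by
    rw [mul_apply, Nat.sum_divisorsAntidiagonal (fun a b => G a * F b)]
    refine sum_congr rfl fun q hq => ?_
    have : k / q ≠ 0 := (Nat.div_pos (Nat.divisor_le hq) (Nat.pos_of_mem_divisors hq)).ne'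
    simp [F, this]
  have hTζ (k : ℕ) : (T * ζ) k = k := by
    rw [coe_mul_zeta_apply]
    simp only [T, ArithmeticFunction.coe_mk]
    rw [← Nat.cast_sum, Nat.sum_totient]
  calc ∑ i ∈ n.divisors, ∑ q ∈ i.divisors, (q.totient : R) * f (i / q)
      = (T * F * ζ) n := by rw [coe_mul_zeta_apply]; exact sum_congr rfl fun i _ => (hmul T i).symm
    _ = (T * ζ * F) n := by rw [mul_right_comm]
    _ = ∑ i ∈ n.divisors, (i : R) * f (n / i) := by simp only [hmul, hTζ]

theorem mul_necklaceCount (d i : ℕ) :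
    i * necklaceCount d i = ∑ q ∈ i.divisors, q.totient * d ^ (i / q) :=
  Nat.mul_div_cancel' (dvd_sum_totient_mul_pow d i)

theorem sum_divisors_mul_necklaceCount (d n : ℕ) :
    ∑ i ∈ n.divisors, i * necklaceCount d i = ∑ i ∈ n.divisors, i * d ^ (n / i) := by
  simp only [mul_necklaceCount]
  exact_mod_cast sum_divisors_sum_divisors_totient_mul (d ^ ·) n

theorem Derivation.map_prod_eq_prod_mul_sum {R A ι : Type*} [CommSemiring R] [CommSemiring A]
    [Algebra R A] (D : Derivation R A A) {s : Finset ι} {f g : ι → A}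
    (h : ∀ i ∈ s, D (f i) = f i * g i) : D (∏ i ∈ s, f i) = (∏ i ∈ s, f i) * ∑ i ∈ s, g i := by
  classical
  induction s using Finset.induction_on with
  | empty => simp
  | insert a s ha ih =>
    rw [prod_insert ha, sum_insert ha, D.leibniz, ih fun i hi => h i (mem_insert_of_mem hi),
      h a (mem_insert_self a s), smul_eq_mul, smul_eq_mul]
    ring

theorem Derivation.map_pow_eq_pow_mul {R A : Type*} [CommSemiring R] [CommSemiring A]
    [Algebra R A] (D : Derivation R A A) {f g : A} (h : D f = f * g) (n : ℕ) :
    D (f ^ n) = f ^ n * (n • g) := by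
  rcases n with _ | n
  · simp
  · rw [D.leibniz_pow, h, Nat.add_sub_cancel, pow_succ]
    simp only [smul_eq_mul, nsmul_eq_mul]
    ring

namespace PowerSeries

theorem coeff_eq_of_derivative_eq_mul {R : Type*} [CommRing R] [IsAddTorsionFree R]
    {F G A B : R⟦X⟧} {K : ℕ} (hF : d⁄dX R F = F * A) (hG : d⁄dX R G = G * B)
    (h0 : constantCoeff F = constantCoeff G) (hAB : ∀ m < K, coeff m A = coeff m B) :
    ∀ n ≤ K, coeff n F = coeff n G := by
  intro n
  induction n using Nat.strong_induction_on with
  | _ n ih =>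
    rcases n with _ | m
    · simpa using h0
    · intro hm
      have hcoeff (H L : R⟦X⟧) (hH : d⁄dX R H = H * L) :
          (m + 1) • coeff (m + 1) H = ∑ x ∈ antidiagonal m, coeff x.1 H * coeff x.2 L := by
        rw [← coeff_mul, ← hH, coeff_derivative, nsmul_eq_mul, mul_comm]
        push_cast; rfl
      refine IsAddTorsionFree.nsmul_right_injective m.succ_ne_zero ?_
      simp only [hcoeff F A hF, hcoeff G B hG]
      refine sum_congr rfl fun x hx => ?_
      have hsum : x.1 + x.2 = m := mem_antidiagonal.mp hx
      rw [ih x.1 (by omega) (by omega), hAB x.2 (by omega)]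

variable {k : Type*} [Field k]

theorem mul_one_sub_C_mul_X_pow_eq_one (c : k) {i : ℕ} (hi : 0 < i) :
    expand i hi.ne' (rescale c (mk 1)) * (1 - C c * X ^ i) = 1 := by
  simpa [expand_C, expand_X, rescale_X] using
    congrArg (fun f => expand i hi.ne' (rescale c f)) (mk_one_mul_one_sub_eq_one (S := k))

theorem coeff_inv_one_sub_C_mul_X_pow (c : k) {i : ℕ} (hi : 0 < i) (n : ℕ) :
    coeff n (1 - C c * X ^ i)⁻¹ = if i ∣ n then c ^ (n / i) else 0 := by
  rw [(inv_eq_iff_mul_eq_one (by simp [hi.ne'])).mpr (mul_one_sub_C_mul_X_pow_eq_one c hi),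
    coeff_expand]
  simp [coeff_rescale]

noncomputable def invOneSubLogDeriv (c : k) (i : ℕ) : k⟦X⟧ :=
  C (i * c) * X ^ (i - 1) * (1 - C c * X ^ i)⁻¹

theorem derivative_inv_one_sub_C_mul_X_pow (c : k) (i : ℕ) :
    d⁄dX k (1 - C c * X ^ i)⁻¹ = (1 - C c * X ^ i)⁻¹ * invOneSubLogDeriv c i := by
  simp only [derivative_inv', map_sub, Derivation.map_one_eq_zero, Derivation.leibniz,
    Derivation.leibniz_pow, derivative_X, derivative_C, smul_eq_mul, nsmul_eq_mul,
    invOneSubLogDeriv, map_mul, map_natCast]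
  ring

theorem coeff_invOneSubLogDeriv (c : k) {i : ℕ} (hi : 0 < i) (m : ℕ) :
    coeff m (invOneSubLogDeriv c i) = if i ∣ m + 1 then i * c ^ ((m + 1) / i) else 0 := by
  have hX : X * invOneSubLogDeriv c i = C (i : k) * ((1 - C c * X ^ i)⁻¹ - 1) := by
    have hw : (1 - C c * X ^ i) * (1 - C c * X ^ i)⁻¹ = 1 :=
      PowerSeries.mul_inv_cancel _ (by simp [hi.ne'])
    have hXi : X * X ^ (i - 1) = (X : k⟦X⟧) ^ i := by rw [← pow_succ', Nat.sub_add_cancel hi]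
    rw [invOneSubLogDeriv, map_mul]
    linear_combination (-C (i : k)) * hw + C (i : k) * C c * (1 - C c * X ^ i)⁻¹ * hXi
  rw [← coeff_succ_X_mul, hX, coeff_C_mul, map_sub, coeff_inv_one_sub_C_mul_X_pow c hi,
    coeff_one, if_neg m.succ_ne_zero, sub_zero, mul_ite, mul_zero]

theorem derivative_prod_inv_one_sub_C_mul_X_pow_pow (s : Finset ℕ) (c : ℕ → k) (e : ℕ → ℕ) :
    d⁄dX k (∏ i ∈ s, ((1 - C (c i) * X ^ i)⁻¹) ^ e i) =
      (∏ i ∈ s, ((1 - C (c i) * X ^ i)⁻¹) ^ e i) * ∑ i ∈ s, e i • invOneSubLogDeriv (c i) i :=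
  (d⁄dX k).map_prod_eq_prod_mul_sum fun i _ =>
    (d⁄dX k).map_pow_eq_pow_mul (derivative_inv_one_sub_C_mul_X_pow (c i) i) (e i)

theorem constantCoeff_prod_inv_one_sub_C_mul_X_pow_pow {s : Finset ℕ} (hs : ∀ i ∈ s, 0 < i)
    (c : ℕ → k) (e : ℕ → ℕ) : constantCoeff (∏ i ∈ s, ((1 - C (c i) * X ^ i)⁻¹) ^ e i) = 1 := by
  rw [map_prod]
  exact prod_eq_one fun i hi => by simp [(hs i hi).ne']

theorem coeff_sum_Icc_nsmul_invOneSubLogDeriv (c : ℕ → k) (e : ℕ → ℕ) {K m : ℕ} (hm : m < K) :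
    coeff m (∑ i ∈ Icc 1 K, e i • invOneSubLogDeriv (c i) i) =
      ∑ i ∈ (m + 1).divisors, e i * (i * c i ^ ((m + 1) / i)) := by
  have hsub : (m + 1).divisors ⊆ Icc 1 K := fun i hi =>
    mem_Icc.mpr ⟨Nat.pos_of_mem_divisors hi, (Nat.divisor_le hi).trans hm⟩
  rw [map_sum, ← sum_subset hsub]
  · refine sum_congr rfl fun i hi => ?_
    rw [map_nsmul, coeff_invOneSubLogDeriv _ (Nat.pos_of_mem_divisors hi),
      if_pos (Nat.dvd_of_mem_divisors hi), nsmul_eq_mul]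
  · intro i hi hni
    rw [map_nsmul, coeff_invOneSubLogDeriv _ (mem_Icc.mp hi).1,
      if_neg fun h => hni (Nat.mem_divisors.mpr ⟨h, m.succ_ne_zero⟩), smul_zero]

end PowerSeries

theorem stmt_14_general (d : ℕ) (K : ℕ) :
    PowerSeries.coeff (R := ℚ) K
        (∏ i ∈ Finset.Icc 1 K, (1 - (d : ℚ⟦X⟧) * (PowerSeries.X : ℚ⟦X⟧) ^ i)⁻¹) =
      PowerSeries.coeff (R := ℚ) K
        (∏ i ∈ Finset.Icc 1 K,
          ((1 - (PowerSeries.X : ℚ⟦X⟧) ^ i)⁻¹) ^ (necklaceCount d i)) := by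
  have hpos : ∀ i ∈ Icc 1 K, 0 < i := fun i hi => (mem_Icc.mp hi).1
  have hF : ∏ i ∈ Icc 1 K, (1 - (d : ℚ⟦X⟧) * X ^ i)⁻¹ =
      ∏ i ∈ Icc 1 K, ((1 - C (d : ℚ) * X ^ i)⁻¹) ^ (fun _ => 1) i := by simp
  have hG : ∏ i ∈ Icc 1 K, ((1 - (X : ℚ⟦X⟧) ^ i)⁻¹) ^ necklaceCount d i =
      ∏ i ∈ Icc 1 K, ((1 - C (1 : ℚ) * X ^ i)⁻¹) ^ necklaceCount d i := by simp
  rw [hF, hG]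
  refine coeff_eq_of_derivative_eq_mul (derivative_prod_inv_one_sub_C_mul_X_pow_pow _ _ _)
    (derivative_prod_inv_one_sub_C_mul_X_pow_pow _ _ _) ?_ (fun m hm => ?_) K le_rfl
  · rw [constantCoeff_prod_inv_one_sub_C_mul_X_pow_pow hpos,
      constantCoeff_prod_inv_one_sub_C_mul_X_pow_pow hpos]
  · rw [coeff_sum_Icc_nsmul_invOneSubLogDeriv _ _ hm, coeff_sum_Icc_nsmul_invOneSubLogDeriv _ _ hm]
    have := sum_divisors_mul_necklaceCount d (m + 1)
    simp only [Nat.cast_one, one_mul, one_pow, mul_one, mul_comm (necklaceCount d _ : ℚ)]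
    exact_mod_cast this.symm

/-- The plethystic/necklace identity: as formal power series,
`∏_{i≥1} 1/(1 − d x^i) = ∏_{i≥1} 1/(1 − x^i)^(a_i)` with
`a_i = (1/i) ∑_{q ∣ i} φ(q) d^(i/q)`, stated coefficient-wise (factors with
`i > K` do not affect the coefficient of `x^K`). -/
theorem stmt_14 (d : ℕ) (hd : 1 ≤ d) (K : ℕ) :
    PowerSeries.coeff (R := ℚ) K
        (∏ i ∈ Finset.Icc 1 K, (1 - (d : ℚ⟦X⟧) * (PowerSeries.X : ℚ⟦X⟧) ^ i)⁻¹) =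
      PowerSeries.coeff (R := ℚ) K
        (∏ i ∈ Finset.Icc 1 K,
          ((1 - (PowerSeries.X : ℚ⟦X⟧) ^ i)⁻¹) ^ (necklaceCount d i)) :=
  stmt_14_general d K
end

section
/- For n ≥ 1 and d ≥ 2, the residue coefficient at the positive real pole x_{n,0} = d^{-1/n} of Z_d(x) = ∏_{i≥1} 1/(1 − d x^i) factorizes as c_{n,0} = (1/n) · [∏_{k=1}^{n-1} (1 − d · d^{-k/n})]^{-1} · [∏_{k≥1} (1 − d^{-k/n})]^{-1}, and in particular c_{1,0} = ∏_{k≥1} (1 − 2^{-k})^{-1} when d = 2. -/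
/-!
Put `t = d^(1/n) > 1`, so that `d = tⁿ` and the pole is `x₀ = t⁻¹`. Among the factors of
`P x = ∏ᵢ (1 - tⁿ x^(i+1)) = 1 / Z_d x`, only `1 - tⁿ xⁿ = (1 - t x) · ∑_{j<n} (t x)^j` vanishes
at `x₀`, so `P x = (1 - t x) · Q x` with `Q = poleCofactor t n`. The tail product in `Q`
converges uniformly near `x₀`, so `Q` is continuous there, and `Q x₀` is `n` times the two
products of the statement, none of them zero; the residue coefficient is `(Q x₀)⁻¹`.
-/

open Filter Topology Finset

lemma tprod_one_sub_ne_zero {ι K : Type*} [NormedField K] [CompleteSpace K] {u : ι → K}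
    (h : ∀ i, 1 - u i ≠ 0) (hu : Summable fun i => ‖u i‖) : ∏' i, (1 - u i) ≠ 0 := by
  simp only [sub_eq_add_neg] at h ⊢
  exact tprod_one_add_ne_zero_of_summable h (by simpa only [norm_neg] using hu)

lemma tprod_inv_one_sub {ι K : Type*} [NormedField K] [CompleteSpace K] {u : ι → K}
    (hu : Summable fun i => ‖u i‖) : ∏' i, (1 - u i)⁻¹ = (∏' i, (1 - u i))⁻¹ := by
  by_cases h : ∃ i, 1 - u i = 0
  -- a vanishing factor makes both sides `0`, since `0⁻¹ = 0`
  · obtain ⟨i, hi⟩ := h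
    rw [tprod_of_exists_eq_zero ⟨i, by simp [hi]⟩, tprod_of_exists_eq_zero ⟨i, hi⟩,
      inv_zero]
  · rw [not_exists] at h
    simp only [sub_eq_add_neg] at h ⊢
    have hu' : Summable fun i => ‖-u i‖ := by simpa only [norm_neg] using hu
    exact (multipliable_one_add_of_summable hu').tprod_inv₀
      (tprod_one_add_ne_zero_of_summable h hu')

lemma summable_abs_mul_pow_add (c : ℝ) (m : ℕ) {x : ℝ} (hx : |x| < 1) :
    Summable fun k : ℕ => |c * x ^ (k + m)| := by
  have hgeom := (summable_geometric_of_lt_one (abs_nonneg x) hx).mul_left (|c| * |x| ^ m)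
  refine hgeom.congr fun k => ?_
  rw [abs_mul, abs_pow, pow_add]
  ring

lemma continuousAt_tprod_one_sub_mul_pow (c : ℝ) (m : ℕ) {x₀ : ℝ} (hx₀ : |x₀| < 1) :
    ContinuousAt (fun x : ℝ => ∏' k : ℕ, (1 - c * x ^ (k + m))) x₀ := by
  obtain ⟨r, hx₀r, hr⟩ := exists_between hx₀
  have hr0 : 0 ≤ r := (abs_nonneg x₀).trans hx₀r.le
  have hbound : ∀ᶠ k in atTop, ∀ x ∈ Set.Icc (-r) r,
      ‖-(c * x ^ (k + m))‖ ≤ |c * r ^ (k + m)| :=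
    Eventually.of_forall fun k x hx => by
      rw [norm_neg, Real.norm_eq_abs, abs_mul, abs_mul, abs_pow, abs_pow, abs_of_nonneg hr0]
      gcongr
      exact abs_le.2 hx
  have hprod := Summable.hasProdUniformlyOn_nat_one_add isCompact_Icc
    (summable_abs_mul_pow_add c m (by rwa [abs_of_nonneg hr0])) hbound (fun k => by fun_prop)
  have hcont := hprod.tendstoUniformlyOn_finsetRange.continuousOn
    (Frequently.of_forall fun n => by fun_prop)
  simp only [← sub_eq_add_neg] at hcont
  exact hcont.continuousAt
    (Icc_mem_nhds (by linarith [neg_abs_le x₀]) (by linarith [le_abs_self x₀]))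

noncomputable def poleCofactor (t : ℝ) (n : ℕ) (x : ℝ) : ℝ :=
  (∏ i ∈ range (n - 1), (1 - t ^ n * x ^ (i + 1))) * (∑ j ∈ range n, (t * x) ^ j) *
    ∏' k : ℕ, (1 - t ^ n * x ^ (k + n + 1))

lemma tprod_one_sub_pow_mul_pow_eq {t x : ℝ} {n : ℕ} (hn : 1 ≤ n) (hx : |x| < 1) :
    ∏' i : ℕ, (1 - t ^ n * x ^ (i + 1)) = (1 - t * x) * poleCofactor t n x := by
  have htail : Multipliable fun k : ℕ => 1 - t ^ n * x ^ (k + n + 1) := by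
    have hs : Summable fun k : ℕ => ‖-(t ^ n * x ^ (k + n + 1))‖ := by
      simpa only [norm_neg, Real.norm_eq_abs, ← add_assoc] using
        summable_abs_mul_pow_add (t ^ n) (n + 1) hx
    simpa only [sub_eq_add_neg] using multipliable_one_add_of_summable hs
  rw [← htail.prod_mul_tprod_nat_mul' (f := fun i => 1 - t ^ n * x ^ (i + 1)) (k := n)]
  obtain ⟨m, rfl⟩ : ∃ m, n = m + 1 := ⟨n - 1, by omega⟩
  rw [poleCofactor, prod_range_succ, Nat.add_sub_cancel, ← mul_pow, ← mul_neg_geom_sum]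
  ring

lemma continuousAt_poleCofactor (t : ℝ) (n : ℕ) {x₀ : ℝ} (hx₀ : |x₀| < 1) :
    ContinuousAt (poleCofactor t n) x₀ :=
  (by fun_prop : Continuous fun x : ℝ => (∏ i ∈ range (n - 1), (1 - t ^ n * x ^ (i + 1))) *
    (∑ j ∈ range n, (t * x) ^ j)).continuousAt.mul
    (by simpa only [← add_assoc] using continuousAt_tprod_one_sub_mul_pow (t ^ n) (n + 1) hx₀)

lemma poleCofactor_inv {t : ℝ} (ht : t ≠ 0) {n : ℕ} (hn : 1 ≤ n) :
    poleCofactor t n t⁻¹ = n * (∏ k ∈ Icc 1 (n - 1), (1 - t ^ n * t⁻¹ ^ k)) *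
      ∏' k : ℕ, (1 - t⁻¹ ^ (k + 1)) := by
  obtain ⟨m, rfl⟩ : ∃ m, n = m + 1 := ⟨n - 1, by omega⟩
  have hgeom : ∑ j ∈ range (m + 1), (t * t⁻¹) ^ j = ((m + 1 : ℕ) : ℝ) := by
    simp only [mul_inv_cancel₀ ht, one_pow, sum_const, card_range, nsmul_eq_mul, mul_one]
  have hfin : ∏ i ∈ range m, (1 - t ^ (m + 1) * t⁻¹ ^ (i + 1)) =
      ∏ k ∈ Icc 1 m, (1 - t ^ (m + 1) * t⁻¹ ^ k) := by
    rw [← Ico_add_one_right_eq_Icc, prod_Ico_eq_prod_range, Nat.add_sub_cancel]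
    exact prod_congr rfl fun k _ => by rw [add_comm 1 k]
  have htail (k : ℕ) : t ^ (m + 1) * t⁻¹ ^ (k + (m + 1) + 1) = t⁻¹ ^ (k + 1) := by
    rw [add_right_comm, pow_add t⁻¹, mul_left_comm, ← mul_pow, mul_inv_cancel₀ ht, one_pow,
      mul_one]
  simp only [poleCofactor, hgeom, hfin, htail, Nat.add_sub_cancel]
  ring

lemma poleCofactor_inv_ne_zero {t : ℝ} (ht : 1 < t) {n : ℕ} (hn : 1 ≤ n) :
    poleCofactor t n t⁻¹ ≠ 0 := by
  have ht0 : t ≠ 0 := by positivity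
  rw [poleCofactor_inv ht0 hn]
  refine mul_ne_zero (mul_ne_zero (by positivity) (prod_ne_zero_iff.2 fun k hk => ?_)) ?_
  · rw [mem_Icc] at hk
    have hlt : 1 < t ^ n * t⁻¹ ^ k := by
      rw [inv_pow, ← pow_sub₀ t ht0 (by omega)]
      exact one_lt_pow₀ ht (by omega)
    exact sub_ne_zero.2 hlt.ne
  · have htinv : t⁻¹ < 1 := inv_lt_one_of_one_lt₀ ht
    refine tprod_one_sub_ne_zero
      (fun k => sub_ne_zero.2 (pow_lt_one₀ (by positivity) htinv k.succ_ne_zero).ne') ?_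
    simpa only [one_mul, Real.norm_eq_abs] using
      summable_abs_mul_pow_add 1 1 (by rwa [abs_of_pos (by positivity)])

theorem tendsto_tprod_inv_mul_one_sub {t : ℝ} (ht : 1 < t) {n : ℕ} (hn : 1 ≤ n) :
    Tendsto (fun x : ℝ => (∏' i : ℕ, (1 - t ^ n * x ^ (i + 1))⁻¹) * (1 - t * x))
      (𝓝[≠] t⁻¹)
      (𝓝 ((1 / n) * (∏ k ∈ Icc 1 (n - 1), (1 - t ^ n * t⁻¹ ^ k))⁻¹ *
        (∏' k : ℕ, (1 - t⁻¹ ^ (k + 1)))⁻¹)) := by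
  have hx₀ : |t⁻¹| < 1 := by
    rw [abs_of_pos (by positivity)]
    exact inv_lt_one_of_one_lt₀ ht
  have heq : (fun x : ℝ => (∏' i : ℕ, (1 - t ^ n * x ^ (i + 1))⁻¹) * (1 - t * x))
      =ᶠ[𝓝[≠] t⁻¹] fun x => (poleCofactor t n x)⁻¹ := by
    have hball : {x : ℝ | |x| < 1} ∈ 𝓝 t⁻¹ :=
      (isOpen_lt continuous_abs continuous_const).mem_nhds hx₀
    filter_upwards [nhdsWithin_le_nhds hball, self_mem_nhdsWithin] with x hx hne
    have hne' : 1 - t * x ≠ 0 := fun h => hne (eq_inv_of_mul_eq_one_right (by linarith))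
    rw [tprod_inv_one_sub (by simpa only [Real.norm_eq_abs] using
        summable_abs_mul_pow_add (t ^ n) 1 hx),
      tprod_one_sub_pow_mul_pow_eq hn hx, mul_inv, mul_right_comm, inv_mul_cancel₀ hne', one_mul]
  rw [show (1 / n : ℝ) * (∏ k ∈ Icc 1 (n - 1), (1 - t ^ n * t⁻¹ ^ k))⁻¹ *
      (∏' k : ℕ, (1 - t⁻¹ ^ (k + 1)))⁻¹ = (poleCofactor t n t⁻¹)⁻¹ by
    rw [poleCofactor_inv (by positivity) hn, mul_inv, mul_inv, one_div]]
  have hcont := (continuousAt_poleCofactor t n hx₀).inv₀ (poleCofactor_inv_ne_zero ht hn)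
  exact (hcont.tendsto.mono_left nhdsWithin_le_nhds).congr' heq.symm

/-- The residue coefficient at the positive real pole `x_{n,0} = d^(-1/n)` of
`Z_d(x) = ∏_{i≥1} 1/(1 − d x^i)` factorizes as
`c_{n,0} = (1/n) · [∏_{k=1}^{n-1} (1 − d·d^(-k/n))]⁻¹ · [∏_{k≥1} (1 − d^(-k/n))]⁻¹`,
where `c_{n,0} = lim_{x → d^(-1/n)} Z_d(x)(1 − d^(1/n) x)`; in particular for
`d = 2`, `c_{1,0} = ∏_{k≥1} (1 − 2^(-k))⁻¹`. -/
theorem stmt_19 (d n : ℕ) (hd : 2 ≤ d) (hn : 1 ≤ n) :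
    Tendsto
      (fun x : ℝ =>
        (∏' i : ℕ, (1 - (d : ℝ) * x ^ (i + 1))⁻¹) * (1 - (d : ℝ) ^ ((1 : ℝ) / n) * x))
      (𝓝[≠] ((d : ℝ) ^ (-(1 : ℝ) / n)))
      (𝓝 ((1 / (n : ℝ)) *
        (∏ k ∈ Finset.Icc 1 (n - 1), (1 - (d : ℝ) * (d : ℝ) ^ (-(k : ℝ) / n)))⁻¹ *
        (∏' k : ℕ, (1 - (d : ℝ) ^ (-((k : ℝ) + 1) / n)))⁻¹)) ∧
    Tendsto
      (fun x : ℝ => (∏' i : ℕ, (1 - 2 * x ^ (i + 1))⁻¹) * (1 - 2 * x))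
      (𝓝[≠] ((1 : ℝ) / 2))
      (𝓝 (∏' k : ℕ, (1 - (2 : ℝ) ^ (-((k : ℝ) + 1)))⁻¹)) := by
  constructor
  · have hd0 : (0 : ℝ) ≤ d := Nat.cast_nonneg d
    have ht : 1 < (d : ℝ) ^ ((1 : ℝ) / n) :=
      Real.one_lt_rpow (by exact_mod_cast hd) (by positivity)
    have htn : ((d : ℝ) ^ ((1 : ℝ) / n)) ^ n = d := by
      rw [one_div]; exact Real.rpow_inv_natCast_pow hd0 (by omega)
    have htinv_pow (k : ℕ) : ((d : ℝ) ^ ((1 : ℝ) / n))⁻¹ ^ k = (d : ℝ) ^ (-(k : ℝ) / n) := by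
      rw [inv_pow, ← Real.rpow_mul_natCast hd0, ← Real.rpow_neg hd0]
      ring_nf
    have h := tendsto_tprod_inv_mul_one_sub ht hn
    simp only [htn, htinv_pow, Nat.cast_add, Nat.cast_one] at h
    rwa [← pow_one ((d : ℝ) ^ ((1 : ℝ) / n))⁻¹, htinv_pow, Nat.cast_one] at h
  · have hpow (k : ℕ) : (2 : ℝ) ^ (-((k : ℝ) + 1)) = (2 : ℝ)⁻¹ ^ (k + 1) := by
      rw [Real.rpow_neg zero_le_two, ← Nat.cast_succ, Real.rpow_natCast, inv_pow]
    have h := tendsto_tprod_inv_mul_one_sub one_lt_two le_rfl (n := 1)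
    have hsum : Summable fun k : ℕ => ‖(2 : ℝ)⁻¹ ^ (k + 1)‖ := by
      simpa only [one_mul, Real.norm_eq_abs] using
        summable_abs_mul_pow_add 1 1 (x := 2⁻¹) (by norm_num [abs_of_pos])
    simp only [hpow]
    rw [tprod_inv_one_sub hsum]
    simpa only [one_div, inv_pow, pow_one, Nat.cast_one, ne_eq, one_ne_zero, not_false_eq_true,
      div_self, tsub_self, Order.lt_one_iff, Icc_eq_empty_of_lt, prod_empty, inv_one, mul_one,
      one_mul] using h
end
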